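/- The uniform morphism φ on {1,2,3} with φ(1)=1221, φ(2)=2332, φ(3)=3113 is overlap-free: the image of every overlap-free word is overlap-free. -/

import Mathlib

/-- A square: a word of the form `x ++ x` with `x` nonempty. -/
def IsSq {α : Type*} (w : List α) : Prop := ∃ x : List α, x ≠ [] ∧ w = x ++ x

/-- A cube: a word of the form `x ++ x ++ x` with `x` nonempty. -/
def IsCube {α : Type*} (w : List α) : Prop := ∃ x : List α, x ≠ [] ∧ w = x ++ x ++ x

/-- A weak square: a word of the form `a ++ x ++ x ++ a` with `a` a letter. -/
def IsWeakSq {α : Type*} (w : List α) : Prop :=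
  ∃ (a : α) (x : List α), w = a :: (x ++ x ++ [a])

/-- An overlap: a word of the form `a ++ x ++ a ++ x ++ a`. -/
def IsOverlap {α : Type*} (w : List α) : Prop :=
  ∃ (a : α) (x : List α), w = a :: (x ++ a :: x ++ [a])

def SqFree {α : Type*} (w : List α) : Prop := ∀ v, v <:+: w → ¬ IsSq v
def CubeFree {α : Type*} (w : List α) : Prop := ∀ v, v <:+: w → ¬ IsCube v
def WeakSqFree {α : Type*} (w : List α) : Prop := ∀ v, v <:+: w → ¬ IsWeakSq v
def OverlapFree {α : Type*} (w : List α) : Prop := ∀ v, v <:+: w → ¬ IsOverlap v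

/-- Applying the morphism determined by letter images `φ` to a finite word. -/
def applyM {α : Type*} (φ : α → List α) (w : List α) : List α := (w.map φ).flatten

def phi : Fin 3 → List (Fin 3) := ![[0,1,1,0], [1,2,2,1], [2,0,0,2]]

/-!
Every letter of `φ(W)` sits in a block `φ c = c (c+1) (c+1) c`. Let `φ(W)` contain an overlap of
period `p`. If `p ≤ 4`, the overlap lies in the image of a factor of `W` of length at most 3, and
these finitely many cases are checked by computation. If `p ≥ 5`, the first period of the overlap
contains a block start, where the factor `c (c+1) (c+1)` occurs. Periodicity copies that factor
`p` positions further on, and in `φ(W)` it occurs only at block starts, so `4 ∣ p`. An overlap of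
period `4q` in `φ(W)`, read in a single column of the blocks, is then an overlap of period `q`
in `W`, because each column of `φ` is injective.
-/

section Words

variable {α : Type*}

def HasOverlapAt (w : List α) (i p : ℕ) : Prop :=
  0 < p ∧ i + 2 * p < w.length ∧ ∀ k ≤ p, w[i + k]? = w[i + k + p]?

instance [DecidableEq α] (w : List α) (i p : ℕ) : Decidable (HasOverlapAt w i p) := by
  unfold HasOverlapAt; infer_instance

theorem hasOverlapAt_drop_take {w : List α} {a m i p : ℕ} :
    HasOverlapAt ((w.drop a).take m) i p ↔ HasOverlapAt w (a + i) p ∧ i + 2 * p < m := by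
  unfold HasOverlapAt
  constructor
  · rintro ⟨hp, hlen, hper⟩
    simp only [List.length_take, List.length_drop] at hlen
    refine ⟨⟨hp, by omega, fun k hk => ?_⟩, by omega⟩
    have := hper k hk
    rw [List.getElem?_take_of_lt (by omega), List.getElem?_take_of_lt (by omega),
      List.getElem?_drop, List.getElem?_drop] at this
    simpa only [Nat.add_assoc] using this
  · rintro ⟨⟨hp, hlen, hper⟩, hm⟩
    refine ⟨hp, by simp only [List.length_take, List.length_drop]; omega, fun k hk => ?_⟩
    rw [List.getElem?_take_of_lt (by omega), List.getElem?_take_of_lt (by omega),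
      List.getElem?_drop, List.getElem?_drop]
    simpa only [Nat.add_assoc] using hper k hk

theorem isOverlap_iff {v : List α} :
    IsOverlap v ↔ ∃ p, HasOverlapAt v 0 p ∧ v.length = 2 * p + 1 := by
  constructor
  · rintro ⟨a, x, rfl⟩
    have hlen : (a :: (x ++ a :: x ++ [a])).length = 2 * (x.length + 1) + 1 := by
      simp only [List.length_cons, List.length_append, List.length_nil]; omega
    refine ⟨x.length + 1, ⟨by omega, by omega, fun k hk => ?_⟩, hlen⟩
    rw [show a :: (x ++ a :: x ++ [a]) = (a :: x) ++ (a :: x) ++ [a] by simp]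
    grind
  · rintro ⟨p, ⟨hp, -, hper⟩, hlen⟩
    simp only [Nat.zero_add] at hper
    obtain ⟨a, x, hax⟩ : ∃ a x, v.take p = a :: x := List.exists_cons_of_ne_nil <| by
      rw [Ne, List.take_eq_nil_iff]
      rintro (h | rfl) <;> simp_all
    have h0 : v[0]? = some a := by rw [← List.getElem?_take_of_lt hp, hax]; rfl
    have hdrop : v.drop p = v.take p ++ [a] := by
      refine List.ext_getElem? fun k => ?_
      rw [List.getElem?_drop]
      rcases lt_trichotomy k p with hk | rfl | hk
      · rw [List.getElem?_append_left (by rw [List.length_take]; omega),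
          List.getElem?_take_of_lt hk, hper k hk.le, Nat.add_comm]
      · rw [List.getElem?_append_right (by simp), ← hper k le_rfl, ← Nat.zero_add k,
          ← hper 0 hp.le, h0, List.length_take, min_eq_left (by omega), Nat.sub_self]
        rfl
      · rw [List.getElem?_eq_none (by omega), List.getElem?_eq_none
          (by rw [List.length_append, List.length_take, List.length_singleton]; omega)]
    refine ⟨a, x, ?_⟩
    rw [← List.take_append_drop p v, hdrop, hax]
    simp

theorem overlapFree_iff {w : List α} : OverlapFree w ↔ ∀ i p, ¬ HasOverlapAt w i p := by
  constructor
  · intro hw i p h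
    refine hw ((w.drop i).take (2 * p + 1)) ((List.take_prefix _ _).isInfix.trans
      (List.drop_suffix _ _).isInfix) (isOverlap_iff.2 ⟨p, ?_, ?_⟩)
    · exact hasOverlapAt_drop_take.2 ⟨h, by omega⟩
    · have := h.2.1
      simp only [List.length_take, List.length_drop]; omega
  · rintro hw v ⟨s, t, rfl⟩ hv
    obtain ⟨p, hv, -⟩ := isOverlap_iff.1 hv
    have hsv : ((s ++ v ++ t).drop s.length).take v.length = v := by simp
    rw [← hsv, hasOverlapAt_drop_take] at hv
    exact hw _ _ hv.1

instance [DecidableEq α] (w : List α) : Decidable (OverlapFree w) :=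
  decidable_of_iff (∀ i < w.length, ∀ p < w.length, ¬ HasOverlapAt w i p) <| by
    rw [overlapFree_iff]
    exact ⟨fun h i p hip => h i (by have := hip.2.1; omega) p (by have := hip.2.1; omega) hip,
      fun h i _ p _ => h i p⟩

theorem mem_sections_replicate_finRange {k : ℕ} (w : List (Fin k)) :
    w ∈ (List.replicate w.length (List.finRange k)).sections :=
  List.mem_sections.2 (List.forall₂_iff_get.2 ⟨by simp, fun _ _ _ => by simp⟩)

section UniformMorphism

variable {φ : α → List α} {L : ℕ}

theorem applyM_cons (a : α) (w : List α) : applyM φ (a :: w) = φ a ++ applyM φ w := by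
  simp [applyM]

theorem length_applyM (hφ : ∀ a, (φ a).length = L) (w : List α) :
    (applyM φ w).length = L * w.length := by
  induction w with
  | nil => rfl
  | cons a w ih => rw [applyM_cons, List.length_append, hφ, ih, List.length_cons]; ring

theorem applyM_take (hφ : ∀ a, (φ a).length = L) (w : List α) (m : ℕ) :
    applyM φ (w.take m) = (applyM φ w).take (L * m) := by
  induction w generalizing m with
  | nil => simp [applyM]
  | cons a w ih =>
    cases m with
    | zero => simp [applyM]
    | succ m =>
      rw [List.take_succ_cons, applyM_cons, applyM_cons, ih, Nat.mul_succ, Nat.add_comm,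
        ← hφ a, List.take_length_add_append]

theorem applyM_drop (hφ : ∀ a, (φ a).length = L) (w : List α) (m : ℕ) :
    applyM φ (w.drop m) = (applyM φ w).drop (L * m) := by
  induction w generalizing m with
  | nil => simp [applyM]
  | cons a w ih =>
    cases m with
    | zero => simp
    | succ m =>
      rw [List.drop_succ_cons, applyM_cons, ih, Nat.mul_succ, Nat.add_comm,
        ← hφ a, List.drop_length_add_append]

theorem getElem?_applyM (hφ : ∀ a, (φ a).length = L) (w : List α) (j : ℕ) {r : ℕ}
    (hr : r < L) : (applyM φ w)[L * j + r]? = w[j]?.bind fun a => (φ a)[r]? := by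
  rw [← List.getElem?_drop, ← applyM_drop hφ, show w[j]? = (w.drop j)[0]? by simp]
  rcases w.drop j with _ | ⟨a, u⟩
  · simp [applyM]
  · rw [applyM_cons, List.getElem?_append_left (by rw [hφ]; exact hr)]
    simp

theorem HasOverlapAt.of_applyM (hφ : ∀ a, (φ a).length = L) {w : List α} {j r q : ℕ}
    (h : HasOverlapAt (applyM φ w) (L * j + r) (L * q)) (hr : r < L)
    (hinj : Function.Injective fun a => (φ a)[r]?) : HasOverlapAt w j q := by
  obtain ⟨hq, hlen, hper⟩ := h
  rw [length_applyM hφ] at hlen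
  refine ⟨Nat.pos_of_mul_pos_left hq, Nat.lt_of_mul_lt_mul_left (a := L) ?_, fun k hk => ?_⟩
  · rw [Nat.mul_add, Nat.mul_left_comm]; omega
  · have := hper (L * k) (Nat.mul_le_mul_left L hk)
    rw [show L * j + r + L * k = L * (j + k) + r by ring,
      show L * (j + k) + r + L * q = L * (j + k + q) + r by ring,
      getElem?_applyM hφ _ _ hr, getElem?_applyM hφ _ _ hr] at this
    have hsome : ∀ a, (φ a)[r]? ≠ none := fun a => by simp [hφ, hr]
    rcases h1 : w[j + k]? with _ | a <;> rcases h2 : w[j + k + q]? with _ | b <;>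
      simp only [h1, h2, Option.bind_none, Option.bind_some] at this
    · rfl
    · exact absurd this.symm (hsome b)
    · exact absurd this (hsome a)
    · rw [hinj this]

end UniformMorphism

end Words

theorem phi_length (c : Fin 3) : (phi c).length = 4 := by
  fin_cases c <;> rfl

theorem phi_getElem?_injective {r : ℕ} (hr : r < 4) :
    Function.Injective fun c => (phi c)[r]? := by
  interval_cases r <;> decide

theorem overlapFree_applyM_phi_of_length_le_three {w : List (Fin 3)} (hw : w.length ≤ 3)
    (hfree : OverlapFree w) : OverlapFree (applyM phi w) := by
  have key : ∀ n ≤ 3, ∀ u ∈ (List.replicate n (List.finRange 3)).sections,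
      OverlapFree u → OverlapFree (applyM phi u) := by decide
  exact key _ hw _ (mem_sections_replicate_finRange w) hfree

theorem not_hasOverlapAt_applyM_phi_of_le_four {W : List (Fin 3)} (hW : OverlapFree W) {i p : ℕ}
    (hp : p ≤ 4) : ¬ HasOverlapAt (applyM phi W) i p := by
  intro h
  set u := (W.drop (i / 4)).take 3
  have hu : OverlapFree u := fun v hv =>
    hW v (hv.trans ((List.take_prefix _ _).isInfix.trans (List.drop_suffix _ _).isInfix))
  have hwin : HasOverlapAt (applyM phi u) (i % 4) p := by
    rw [applyM_take phi_length, applyM_drop phi_length, hasOverlapAt_drop_take, Nat.div_add_mod]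
    exact ⟨h, by omega⟩
  exact overlapFree_iff.1 (overlapFree_applyM_phi_of_length_le_three (List.length_take_le _ _) hu)
    _ _ hwin

def IsMarkerAt (w : List (Fin 3)) (t : ℕ) : Prop :=
  ∃ c, w[t]? = some c ∧ w[t + 1]? = some (c + 1) ∧ w[t + 2]? = some (c + 1)

instance (w : List (Fin 3)) (t : ℕ) : Decidable (IsMarkerAt w t) := by
  unfold IsMarkerAt; infer_instance

theorem isMarkerAt_drop_take {w : List (Fin 3)} {a m i : ℕ} (h : i + 2 < m) :
    IsMarkerAt ((w.drop a).take m) i ↔ IsMarkerAt w (a + i) := by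
  simp only [IsMarkerAt, List.getElem?_take_of_lt (by omega : i < m),
    List.getElem?_take_of_lt (by omega : i + 1 < m), List.getElem?_take_of_lt h,
    List.getElem?_drop, Nat.add_assoc]

theorem isMarkerAt_applyM_phi_iff {W : List (Fin 3)} {t : ℕ}
    (ht : t + 2 < (applyM phi W).length) : IsMarkerAt (applyM phi W) t ↔ t % 4 = 0 := by
  set u := (W.drop (t / 4)).take 2
  have key : ∀ n ≤ 2, ∀ u ∈ (List.replicate n (List.finRange 3)).sections, ∀ r < 4,
      r + 2 < 4 * n → (IsMarkerAt (applyM phi u) r ↔ r = 0) := by decide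
  have hu : t % 4 + 2 < 4 * u.length := by
    rw [length_applyM phi_length] at ht
    simp only [u, List.length_take, List.length_drop]
    omega
  rw [← key _ (List.length_take_le _ _) u (mem_sections_replicate_finRange u) _
    (Nat.mod_lt _ (by norm_num)) hu, applyM_take phi_length, applyM_drop phi_length,
    isMarkerAt_drop_take (by omega), Nat.div_add_mod]

theorem HasOverlapAt.isMarkerAt_add {w : List (Fin 3)} {i p t : ℕ} (h : HasOverlapAt w i p)
    (hit : i ≤ t) (htp : t + 2 ≤ i + p) (hm : IsMarkerAt w t) : IsMarkerAt w (t + p) := by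
  have hper : ∀ k ≤ 2, w[t + k]? = w[t + p + k]? := fun k hk => by
    have := h.2.2 (t - i + k) (by omega)
    rwa [show i + (t - i + k) = t + k by omega, show t + k + p = t + p + k by omega] at this
  obtain ⟨c, h0, h1, h2⟩ := hm
  exact ⟨c, by simpa [h0] using (hper 0 (by norm_num)).symm, by rw [← hper 1 (by norm_num), h1],
    by rw [← hper 2 le_rfl, h2]⟩

theorem four_dvd_of_hasOverlapAt_applyM_phi {W : List (Fin 3)} {i p : ℕ}
    (h : HasOverlapAt (applyM phi W) i p) (hp : 5 ≤ p) : 4 ∣ p := by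
  have hlen := h.2.1
  set t := 4 * ((i + 3) / 4)
  have hm : IsMarkerAt (applyM phi W) t := (isMarkerAt_applyM_phi_iff (by omega)).2 (by omega)
  have hmp := h.isMarkerAt_add (by omega) (by omega) hm
  have := (isMarkerAt_applyM_phi_iff (by omega)).1 hmp
  omega

theorem stmt6 : ∀ W : List (Fin 3), OverlapFree W → OverlapFree (applyM phi W) := by
  intro W hW
  refine overlapFree_iff.2 fun i p h => ?_
  rcases le_or_gt p 4 with hp | hp
  · exact not_hasOverlapAt_applyM_phi_of_le_four hW hp h
  obtain ⟨q, rfl⟩ := four_dvd_of_hasOverlapAt_applyM_phi h hp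
  have hr : i % 4 < 4 := Nat.mod_lt _ (by norm_num)
  rw [← Nat.div_add_mod i 4] at h
  exact overlapFree_iff.1 hW _ _ (h.of_applyM phi_length hr (phi_getElem?_injective hr))
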